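/- arXiv:1602.06864 — 2 statements merged into one kernel-verified Lean document; each statement's English description precedes it below -/
import Mathlib

section
/- Let K be a non-degenerate d-simplex with vertices Q_0, …, Q_d and let κ = min_j κ_j be the minimum height of K. Let r ∈ [1, ∞) and let v be an affine function on K with v(Q_j) = v_j. Then ‖∇v‖_{L^r(K)} ≤ ((d+1)/κ) · (|K| · ∑_{j=0}^d |v_j|^r)^{1/r} · (d+1)^{−1/r}, i.e., ‖∇v‖_{L^r(K)} ≤ ((d+1)/κ) ‖M v‖_{L^r(K)} where ‖M v‖_{L^r(K)} = (|K|/(d+1) ∑_{j=0}^d |v_j|^r)^{1/r}. -/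
/-! The gradient of an affine map `v` is `∑ⱼ vⱼ ∇λⱼ`, with `λⱼ` the barycentric coordinates.
Moving from `Qⱼ` along `-u / (∇λⱼ · u)` makes `λⱼ` vanish, so it lands on the opposite face;
hence `κⱼ · |∇λⱼ · u| ≤ ‖u‖`, i.e. `|∇λⱼ| ≤ 1/κⱼ ≤ 1/κ`. The triangle inequality gives
`|∇v| ≤ κ⁻¹ ∑ⱼ |vⱼ|`, and the power-mean inequality bounds `∑ⱼ |vⱼ|` by
`(d+1) ((∑ⱼ |vⱼ|^r)/(d+1))^{1/r}`; the factor `|K|^{1/r}` is common to both sides. -/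

open MeasureTheory

namespace AffineBasis

section Ring

variable {ι k V P W : Type*} [Fintype ι] [Ring k] [AddCommGroup V] [Module k V]
  [AddTorsor V P] [AddCommGroup W] [Module k W] (b : AffineBasis ι k P)

theorem mem_affineSpan_image_ne_of_coord_eq_zero [Nontrivial k] {j : ι} {q : P} (hq : b.coord j q = 0) :
    q ∈ affineSpan k (b '' {i | i ≠ j}) := by
  rw [← b.affineCombination_coord_eq_self q]
  refine affineCombination_mem_affineSpan_image (b.sum_coord_apply_eq_one q) ?_ b
  intro i _ hi
  obtain rfl : i = j := by simpa using hi
  exact hq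

theorem apply_eq_sum_coord_smul (f : P →ᵃ[k] W) (q : P) :
    f q = ∑ j, b.coord j q • f (b j) := by
  conv_lhs => rw [← b.affineCombination_coord_eq_self q]
  rw [Finset.map_affineCombination _ _ _ (b.sum_coord_apply_eq_one q),
    Finset.affineCombination_eq_linear_combination _ _ _ (b.sum_coord_apply_eq_one q)]
  rfl

theorem linear_apply_eq_sum_coord_linear_smul (f : P →ᵃ[k] W) (u : V) :
    f.linear u = ∑ j, (b.coord j).linear u • f (b j) := by
  obtain ⟨i⟩ := b.nonempty
  have hf : f.linear u = f (u +ᵥ b i) - f (b i) := by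
    rw [f.map_vadd, vadd_eq_add, add_sub_cancel_right]
  rw [hf, b.apply_eq_sum_coord_smul f, b.apply_eq_sum_coord_smul f, ← Finset.sum_sub_distrib]
  refine Finset.sum_congr rfl fun j _ => ?_
  rw [AffineMap.map_vadd, vadd_eq_add, add_smul, add_sub_cancel_right]

end Ring

section Normed

variable {ι 𝕜 V P W : Type*} [NontriviallyNormedField 𝕜] [NormedAddCommGroup V]
  [NormedSpace 𝕜 V] [MetricSpace P] [NormedAddTorsor V P] (b : AffineBasis ι 𝕜 P)

theorem infDist_mul_norm_coord_linear_le [Fintype ι] (j : ι) (u : V) :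
    Metric.infDist (b j) (affineSpan 𝕜 (b '' {i | i ≠ j}))
      * ‖(b.coord j).linear u‖ ≤ ‖u‖ := by
  set c := (b.coord j).linear u
  rcases eq_or_ne c 0 with hc | hc
  · simp [hc]
  have hface : (-c⁻¹ • u) +ᵥ b j ∈ affineSpan 𝕜 (b '' {i | i ≠ j}) := by
    refine b.mem_affineSpan_image_ne_of_coord_eq_zero ?_
    rw [AffineMap.map_vadd, map_smul, b.coord_apply_eq, vadd_eq_add, smul_eq_mul,
      neg_mul, inv_mul_cancel₀ hc, neg_add_cancel]
  calc Metric.infDist (b j) (affineSpan 𝕜 (b '' {i | i ≠ j})) * ‖c‖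
      ≤ dist (b j) ((-c⁻¹ • u) +ᵥ b j) * ‖c‖ := by
        gcongr; exact Metric.infDist_le_dist_of_mem hface
    _ = ‖u‖ := by
        rw [dist_comm, dist_vadd_left, norm_smul, norm_neg, norm_inv]
        field_simp [norm_ne_zero_iff.mpr hc]

theorem infDist_pos [Nontrivial ι] [CompleteSpace 𝕜] [FiniteDimensional 𝕜 V] (j : ι) :
    0 < Metric.infDist (b j) (affineSpan 𝕜 (b '' {i | i ≠ j})) := by
  obtain ⟨i, hi⟩ := exists_ne j
  refine ((affineSpan 𝕜 _).closed_of_finiteDimensional.notMem_iff_infDist_pos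
    ⟨b i, subset_affineSpan 𝕜 _ (Set.mem_image_of_mem b hi)⟩).1 ?_
  rw [SetLike.mem_coe, b.ind.mem_affineSpan_iff]
  simp

variable [Fintype ι] [CompleteSpace 𝕜] [FiniteDimensional 𝕜 V] [NormedAddCommGroup W]
  [NormedSpace 𝕜 W]

theorem norm_toContinuousLinearMap_linear_le (f : P →ᵃ[𝕜] W) {κ : ℝ} (hκ : 0 < κ)
    (hheight : ∀ j, κ ≤ Metric.infDist (b j) (affineSpan 𝕜 (b '' {i | i ≠ j}))) :
    ‖LinearMap.toContinuousLinearMap f.linear‖ ≤ (∑ j, ‖f (b j)‖) / κ := by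
  refine ContinuousLinearMap.opNorm_le_bound _ (by positivity) fun u => ?_
  have hcoord : ∀ j, ‖(b.coord j).linear u‖ ≤ ‖u‖ / κ := fun j => by
    rw [le_div_iff₀ hκ, mul_comm]
    exact (mul_le_mul_of_nonneg_right (hheight j) (norm_nonneg _)).trans
      (b.infDist_mul_norm_coord_linear_le j u)
  calc ‖f.linear u‖ = ‖∑ j, (b.coord j).linear u • f (b j)‖ := by
        rw [b.linear_apply_eq_sum_coord_linear_smul]
    _ ≤ ∑ j, ‖u‖ / κ * ‖f (b j)‖ := by
        refine (norm_sum_le _ _).trans (Finset.sum_le_sum fun j _ => ?_)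
        rw [norm_smul]
        gcongr
        exact hcoord j
    _ = (∑ j, ‖f (b j)‖) / κ * ‖u‖ := by
        rw [← Finset.mul_sum]; ring

end Normed

end AffineBasis

theorem Real.sum_le_card_mul_rpow_mean {ι : Type*} [Fintype ι] (f : ι → ℝ)
    (hf : ∀ i, 0 ≤ f i) {p : ℝ} (hp : 1 ≤ p) :
    ∑ i, f i ≤ Fintype.card ι * ((∑ i, f i ^ p) / Fintype.card ι) ^ (1 / p) := by
  rcases isEmpty_or_nonempty ι with _ | _
  · simp
  have hn : (0 : ℝ) < Fintype.card ι := by exact_mod_cast Fintype.card_pos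
  have hmean := Real.arith_mean_le_rpow_mean Finset.univ (fun _ => (Fintype.card ι : ℝ)⁻¹) f
    (fun _ _ => by positivity) (by simp [hn.ne']) (fun i _ => hf i) hp
  rw [← Finset.mul_sum, ← Finset.mul_sum] at hmean
  rw [div_eq_inv_mul]
  exact (inv_mul_le_iff₀ hn).mp hmean

/-- inverse inequality on a non-degenerate `d`-simplex `K` (with minimum
height `κ`) for an affine function `v` with vertex values `v_j = v(Q_j)`:
`‖∇v‖_{L^r(K)} = |K|^{1/r}·|∇v| ≤ ((d+1)/κ)·(|K|/(d+1)·∑_j |v_j|^r)^{1/r}`. -/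
theorem stmt6 (d : ℕ) (Q : Fin (d + 1) → EuclideanSpace ℝ (Fin d))
    (hQ : AffineIndependent ℝ Q) (hspan : affineSpan ℝ (Set.range Q) = ⊤)
    (r : ℝ) (hr : 1 ≤ r)
    (v : EuclideanSpace ℝ (Fin d) →ᵃ[ℝ] ℂ)
    (κ : ℝ)
    (hκ : κ = ⨅ j, Metric.infDist (Q j)
        ((affineSpan ℝ (Q '' {i | i ≠ j}) : AffineSubspace ℝ (EuclideanSpace ℝ (Fin d)))
          : Set (EuclideanSpace ℝ (Fin d)))) :
    ((volume (convexHull ℝ (Set.range Q))).toReal) ^ (1 / r)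
        * ‖LinearMap.toContinuousLinearMap v.linear‖
      ≤ (((d : ℝ) + 1) / κ)
        * ((volume (convexHull ℝ (Set.range Q))).toReal / ((d : ℝ) + 1)
            * ∑ j, ‖v (Q j)‖ ^ r) ^ (1 / r) := by
  obtain _ | d := d
  · have hL : LinearMap.toContinuousLinearMap v.linear = 0 :=
      ContinuousLinearMap.ext fun x => by simp [Subsingleton.elim x 0]
    have hκ0 : 0 ≤ κ := hκ ▸ Real.iInf_nonneg fun j => Metric.infDist_nonneg
    rw [hL, norm_zero, mul_zero]
    positivity
  set b := AffineBasis.mk Q hQ hspan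
  obtain ⟨j₀, hj₀⟩ := exists_eq_ciInf_of_finite
    (f := fun j => Metric.infDist (b j) (affineSpan ℝ (b '' {i | i ≠ j})))
  have hκpos : 0 < κ := hκ ▸ hj₀ ▸ b.infDist_pos j₀
  have hheight : ∀ j, κ ≤ Metric.infDist (b j) (affineSpan ℝ (b '' {i | i ≠ j})) :=
    fun j => hκ ▸ ciInf_le (Set.finite_range _).bddBelow j
  have hgrad := b.norm_toContinuousLinearMap_linear_le v hκpos hheight
  have hmean := Real.sum_le_card_mul_rpow_mean (fun j => ‖v (Q j)‖) (fun _ => norm_nonneg _) hr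
  rw [Fintype.card_fin, Nat.cast_add_one] at hmean
  set A := (volume (convexHull ℝ (Set.range Q))).toReal
  set n : ℝ := ((d + 1 : ℕ) : ℝ) + 1
  calc A ^ (1 / r) * ‖LinearMap.toContinuousLinearMap v.linear‖
      ≤ A ^ (1 / r) * (n * ((∑ j, ‖v (Q j)‖ ^ r) / n) ^ (1 / r) / κ) := by
        gcongr
        exact hgrad.trans (by gcongr; exact hmean)
    _ = n / κ * (A / n * ∑ j, ‖v (Q j)‖ ^ r) ^ (1 / r) := by
        rw [show A / n * ∑ j, ‖v (Q j)‖ ^ r = A * ((∑ j, ‖v (Q j)‖ ^ r) / n) by ring,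
          Real.mul_rpow (by positivity) (by positivity)]
        ring
end

section
/- Let X be a Banach space with norm ‖·‖, let A be a bounded invertible operator on X, p ∈ (1,∞), τ > 0, and q ∈ (1,∞). For a sequence v = (v^n)_{n≥0} in X define the K-functional K(t,w) = inf{‖a‖ + t‖Ab‖ : w = a + b} relative to the pair (X, D(A)) where D(A) has norm ‖A·‖. Then there exists C > 0 depending only on p such that ‖v¹‖_{1−1/p,p} ≤ C(‖Av_1‖_{l^p_τ} + ‖D_τ v‖_{l^p_τ}), where ‖w‖_{1−1/p,p}^p = ∫_0^∞ |t^{−1+1/p}K(t,w)|^p dt/t, v_1 = (v^{n+1})_n, D_τ v = ((v^{n+1}−v^n)/τ)_n, and ‖u‖_{l^p_τ}^p = ∑_n ‖u^n‖^p τ. -/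
/-!
Split `(0, ∞)` into the intervals `(nτ, (n+1)τ]`. On the `n`-th one, the decomposition
`v¹ = (v¹ - v^{n+1}) + v^{n+1}` and telescoping give
`K(t, v¹)/t ≤ (1/n) ∑_{j<n} ‖D_τ v^{j+1}‖ + ‖A v^{n+1}‖`, and the weight `t^{-1+1/p}` together
with the measure `dt/t` turns the integrand into `(K(t, v¹)/t)^p`. Integrating costs a factor `τ`,
so the trace norm is at most the `l^p_τ` norm of (Cesàro means of `‖D_τ v‖`) + `‖A v_1‖`.
Minkowski's inequality and Hardy's discrete inequality `‖Cesàro means of a‖_p ≤ p/(p-1) ‖a‖_p`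
then give the bound with `C = p/(p-1)`.
-/

open MeasureTheory Set

section Hardy

open Finset

namespace Real

theorem mul_mul_rpow_sub_one_le {p x y : ℝ} (hp : 1 < p) (hx : 0 ≤ x) (hy : 0 ≤ y) :
    p * (x * y ^ (p - 1)) ≤ x ^ p + (p - 1) * y ^ p := by
  have hpq : p.HolderConjugate (p / (p - 1)) := .conjExponent hp
  have hy' : (y ^ (p - 1)) ^ (p / (p - 1)) = y ^ p := by
    rw [← rpow_mul hy]; congr 1; field_simp [(by linarith : p - 1 ≠ 0)]
  have := young_inequality_of_nonneg hx (rpow_nonneg hy (p - 1)) hpq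
  rw [hy'] at this
  have e : p * (y ^ p / (p / (p - 1))) = (p - 1) * y ^ p := by
    field_simp [(by linarith : p - 1 ≠ 0)]
  calc p * (x * y ^ (p - 1)) ≤ p * (x ^ p / p + y ^ p / (p / (p - 1))) := by gcongr
    _ = x ^ p + (p - 1) * y ^ p := by rw [mul_add, e]; field_simp

/-- Elliott's step in the proof of Hardy's inequality: when `x` and `y` are the means of the first
`n` and `n + 1` terms of a sequence, `(n + 1) y - n x` is its term of index `n`, and the last
summand telescopes. -/
theorem sub_one_mul_rpow_le_of_mean {p x y n : ℝ} (hp : 1 < p) (hx : 0 ≤ x) (hy : 0 ≤ y)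
    (hn : 0 ≤ n) :
    (p - 1) * y ^ p ≤
      p * (((n + 1) * y - n * x) * y ^ (p - 1)) + (n * x ^ p - (n + 1) * y ^ p) := by
  have hyp : y ^ (p - 1) * y = y ^ p := by
    rw [← rpow_add_one' hy (by linarith), sub_add_cancel]
  have := mul_le_mul_of_nonneg_left (mul_mul_rpow_sub_one_le hp hx hy) hn
  linear_combination this - p * (n + 1) * hyp

theorem le_rpow_mul_of_le_mul_rpow_mul_rpow {p q S B c : ℝ} (hpq : p.HolderConjugate q)
    (hS : 0 ≤ S) (hB : 0 ≤ B) (hc : 0 ≤ c) (h : S ≤ c * (B ^ (1 / p) * S ^ (1 / q))) :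
    S ≤ c ^ p * B := by
  rcases hS.eq_or_lt with rfl | hS
  · positivity
  have hsplit : S ^ (1 / p) * S ^ (1 / q) = S := by
    rw [← rpow_add hS, one_div, one_div, hpq.inv_add_inv_eq_one, rpow_one]
  have h' : S ^ (1 / p) ≤ c * B ^ (1 / p) := by
    refine le_of_mul_le_mul_right ?_ (rpow_pos_of_pos hS (1 / q))
    linarith
  calc S = (S ^ (1 / p)) ^ p := by
        rw [← rpow_mul hS.le, one_div_mul_cancel hpq.ne_zero, rpow_one]
    _ ≤ (c * B ^ (1 / p)) ^ p := by gcongr; exact hpq.nonneg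
    _ = c ^ p * B := by
      rw [mul_rpow hc (by positivity), ← rpow_mul hB, one_div_mul_cancel hpq.ne_zero,
        rpow_one]

end Real

theorem sub_one_mul_sum_rpow_average_le {p : ℝ} (hp : 1 < p) {a : ℕ → ℝ} (ha : ∀ j, 0 ≤ a j)
    (N : ℕ) :
    (p - 1) * ∑ n ∈ range N, ((∑ j ∈ range (n + 1), a j) / ↑(n + 1)) ^ p ≤
      p * ∑ n ∈ range N, a n * ((∑ j ∈ range (n + 1), a j) / ↑(n + 1)) ^ (p - 1) := by
  set x : ℕ → ℝ := fun n => (∑ j ∈ range n, a j) / n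
  have hx : ∀ n, 0 ≤ x n := fun n => div_nonneg (sum_nonneg fun j _ => ha j) n.cast_nonneg
  have hnx : ∀ n : ℕ, n * x n = ∑ j ∈ range n, a j := fun n => by
    rcases n.eq_zero_or_pos with rfl | hn
    · simp
    · exact mul_div_cancel₀ _ (by positivity)
  have ha_eq : ∀ n : ℕ, a n = ((n : ℝ) + 1) * x (n + 1) - n * x n := fun n => by
    rw [← Nat.cast_add_one, hnx, hnx, sum_range_succ]; ring
  have htelescope : ∑ n ∈ range N, (n * x n ^ p - ↑(n + 1) * x (n + 1) ^ p) ≤ 0 := by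
    rw [sum_range_sub' (fun n : ℕ => n * x n ^ p)]
    simp only [CharP.cast_eq_zero, zero_mul, zero_sub, Left.neg_nonpos_iff]
    exact mul_nonneg N.cast_nonneg (Real.rpow_nonneg (hx N) p)
  calc (p - 1) * ∑ n ∈ range N, x (n + 1) ^ p
      ≤ ∑ n ∈ range N, (p * (a n * x (n + 1) ^ (p - 1)) +
          (n * x n ^ p - ↑(n + 1) * x (n + 1) ^ p)) := by
        rw [mul_sum]
        gcongr with n
        rw [ha_eq]
        push_cast
        exact Real.sub_one_mul_rpow_le_of_mean hp (hx n) (hx (n + 1)) n.cast_nonneg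
    _ ≤ p * ∑ n ∈ range N, a n * x (n + 1) ^ (p - 1) := by
        rw [sum_add_distrib, ← mul_sum]
        linarith

theorem sum_range_rpow_average_le {p : ℝ} (hp : 1 < p) {a : ℕ → ℝ} (ha : ∀ j, 0 ≤ a j) (N : ℕ) :
    ∑ n ∈ range N, ((∑ j ∈ range (n + 1), a j) / ↑(n + 1)) ^ p ≤
      (p / (p - 1)) ^ p * ∑ n ∈ range N, a n ^ p := by
  set y : ℕ → ℝ := fun n => (∑ j ∈ range (n + 1), a j) / ↑(n + 1)
  have hy : ∀ n, 0 ≤ y n := fun n => div_nonneg (sum_nonneg fun j _ => ha j) (Nat.cast_nonneg _)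
  have hpq : p.HolderConjugate (p / (p - 1)) := .conjExponent hp
  have hp1 : 0 < p - 1 := by linarith
  have hpow : ∀ n, (y n ^ (p - 1)) ^ (p / (p - 1)) = y n ^ p := fun n => by
    rw [← Real.rpow_mul (hy n), mul_div_cancel₀ _ hp1.ne']
  have holder := Real.inner_le_Lp_mul_Lq_of_nonneg (s := range N) hpq (fun j _ => ha j)
    (fun n _ => Real.rpow_nonneg (hy n) (p - 1))
  simp only [hpow] at holder
  refine Real.le_rpow_mul_of_le_mul_rpow_mul_rpow hpq
    (sum_nonneg fun n _ => Real.rpow_nonneg (hy n) p)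
    (sum_nonneg fun n _ => Real.rpow_nonneg (ha n) p) (div_pos (by linarith) hp1).le ?_
  calc ∑ n ∈ range N, y n ^ p ≤ p / (p - 1) * ∑ n ∈ range N, a n * y n ^ (p - 1) := by
        rw [div_mul_eq_mul_div, le_div_iff₀ hp1]
        linarith [sub_one_mul_sum_rpow_average_le hp ha N]
    _ ≤ _ := by gcongr

theorem summable_and_tsum_rpow_average_le {p : ℝ} (hp : 1 < p) {a : ℕ → ℝ} (ha : ∀ j, 0 ≤ a j)
    (hsum : Summable fun n => a n ^ p) :
    Summable (fun n : ℕ => ((∑ j ∈ range n, a j) / n) ^ p) ∧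
      ∑' n : ℕ, ((∑ j ∈ range n, a j) / n) ^ p ≤ (p / (p - 1)) ^ p * ∑' n, a n ^ p := by
  have hnonneg : ∀ n : ℕ, 0 ≤ ((∑ j ∈ range n, a j) / n) ^ p := fun n =>
    Real.rpow_nonneg (div_nonneg (sum_nonneg fun j _ => ha j) n.cast_nonneg) p
  have hbound : ∀ N, ∑ n ∈ range N, ((∑ j ∈ range n, a j) / n) ^ p ≤
      (p / (p - 1)) ^ p * ∑' n, a n ^ p := by
    have hC : 0 ≤ (p / (p - 1)) ^ p := Real.rpow_nonneg (div_pos (by linarith) (by linarith)).le p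
    rintro (_ | N)
    · simpa using mul_nonneg hC (tsum_nonneg fun n => Real.rpow_nonneg (ha n) p)
    · rw [sum_range_succ', range_zero, sum_empty, Nat.cast_zero, div_zero,
        Real.zero_rpow (by linarith), add_zero]
      calc _ ≤ (p / (p - 1)) ^ p * ∑ n ∈ range N, a n ^ p := sum_range_rpow_average_le hp ha N
        _ ≤ _ := by gcongr; exact hsum.sum_le_tsum _ fun n _ => Real.rpow_nonneg (ha n) p
  exact ⟨summable_of_sum_range_le hnonneg hbound, Real.tsum_le_of_sum_range_le hnonneg hbound⟩

theorem summable_and_tsum_rpow_average_add_le {p τ : ℝ} (hp : 1 < p) (hτ : 0 ≤ τ)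
    {d b : ℕ → ℝ} (hd : ∀ n, 0 ≤ d n) (hb : ∀ n, 0 ≤ b n)
    (hsd : Summable fun n => d n ^ p) (hsb : Summable fun n => b n ^ p) :
    Summable (fun n : ℕ => ((∑ j ∈ range n, d (j + 1)) / n + b n) ^ p * τ) ∧
      (∑' n : ℕ, ((∑ j ∈ range n, d (j + 1)) / n + b n) ^ p * τ) ^ (1 / p) ≤
        p / (p - 1) * ((∑' n, b n ^ p * τ) ^ (1 / p) + (∑' n, d n ^ p * τ) ^ (1 / p)) := by
  have hp0 : 0 < p := by linarith
  have hq : 1 ≤ p / (p - 1) := by rw [le_div_iff₀ (by linarith)]; linarith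
  set m : ℕ → ℝ := fun n => (∑ j ∈ range n, d (j + 1)) / n
  have hm0 : ∀ n, 0 ≤ m n := fun n => div_nonneg (sum_nonneg fun j _ => hd (j + 1)) n.cast_nonneg
  obtain ⟨hsm, hm⟩ := summable_and_tsum_rpow_average_le hp (fun j => hd (j + 1))
    ((summable_nat_add_iff 1).mpr hsd)
  obtain ⟨hsum, hmink⟩ := Real.Lp_add_le_tsum_of_nonneg hp.le hm0 hb hsm hsb
  have hD0 : 0 ≤ ∑' n, d n ^ p := tsum_nonneg fun n => Real.rpow_nonneg (hd n) p
  have hB0 : 0 ≤ ∑' n, b n ^ p := tsum_nonneg fun n => Real.rpow_nonneg (hb n) p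
  have hshift : ∑' n, d (n + 1) ^ p ≤ ∑' n, d n ^ p := by
    rw [hsd.tsum_eq_zero_add]
    linarith [Real.rpow_nonneg (hd 0) p]
  have hhardy : (∑' n, m n ^ p) ^ (1 / p) ≤ p / (p - 1) * (∑' n, d n ^ p) ^ (1 / p) := by
    calc _ ≤ ((p / (p - 1)) ^ p * ∑' n, d n ^ p) ^ (1 / p) := by
          gcongr
          · exact tsum_nonneg fun n => Real.rpow_nonneg (hm0 n) p
          · exact hm.trans (by gcongr)
      _ = _ := by
          rw [Real.mul_rpow (by positivity) hD0, ← Real.rpow_mul (by positivity),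
            mul_one_div_cancel hp0.ne', Real.rpow_one]
  refine ⟨hsum.mul_right τ, ?_⟩
  rw [tsum_mul_right, tsum_mul_right, tsum_mul_right,
    Real.mul_rpow (tsum_nonneg fun n => Real.rpow_nonneg (add_nonneg (hm0 n) (hb n)) p) hτ,
    Real.mul_rpow hB0 hτ, Real.mul_rpow hD0 hτ]
  calc _ ≤ ((∑' n, m n ^ p) ^ (1 / p) + (∑' n, b n ^ p) ^ (1 / p)) * τ ^ (1 / p) := by gcongr
    _ ≤ (p / (p - 1) * (∑' n, d n ^ p) ^ (1 / p) + p / (p - 1) * (∑' n, b n ^ p) ^ (1 / p)) *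
          τ ^ (1 / p) := by
        gcongr
        exact le_mul_of_one_le_left (by positivity) hq
    _ = _ := by ring

end Hardy

theorem Real.rpow_neg_one_add_one_div_mul_rpow_div {p t k : ℝ} (hp : p ≠ 0) (ht : 0 < t)
    (hk : 0 ≤ k) : (t ^ (-1 + 1 / p) * k) ^ p / t = (k / t) ^ p := by
  rw [Real.mul_rpow (Real.rpow_nonneg ht.le _) hk, ← Real.rpow_mul ht.le, Real.div_rpow hk ht.le,
    show (-1 + 1 / p) * p = 1 - p by field_simp; ring, Real.rpow_sub ht, Real.rpow_one]
  field_simp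

theorem lintegral_Ioi_le_tsum_of_le_on_Ioc {τ : ℝ} (hτ : 0 < τ) {f : ℝ → ENNReal} {c : ℕ → ℝ}
    (hf : ∀ n : ℕ, ∀ t ∈ Ioc (n * τ) ((n + 1) * τ), f t ≤ ENNReal.ofReal (c n)) :
    ∫⁻ t in Ioi 0, f t ≤ ∑' n : ℕ, ENNReal.ofReal (c n * τ) := by
  have hcover : ⋃ n : ℕ, Ioc (n * τ) ((n + 1) * τ) = Ioi 0 := by
    simpa using iUnion_Ioc_map_succ_eq_Ioi (f := fun n : ℕ => n * τ)
      (fun n => by simp only [Nat.bot_eq_zero, Nat.cast_zero, zero_mul]; positivity)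
      (Filter.not_bddAbove_of_tendsto_atTop (tendsto_natCast_atTop_atTop.atTop_mul_const hτ))
  calc ∫⁻ t in Ioi 0, f t = ∫⁻ t in ⋃ n : ℕ, Ioc (n * τ) ((n + 1) * τ), f t := by rw [hcover]
    _ ≤ ∑' n : ℕ, ∫⁻ t in Ioc (n * τ) ((n + 1) * τ), f t := lintegral_iUnion_le _ _
    _ ≤ ∑' n : ℕ, ENNReal.ofReal (c n * τ) := ENNReal.tsum_le_tsum fun n => ?_
  calc ∫⁻ t in Ioc (n * τ) ((n + 1) * τ), f t
      ≤ ∫⁻ t in Ioc (n * τ) ((n + 1) * τ), ENNReal.ofReal (c n) :=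
        setLIntegral_mono measurable_const (hf n)
    _ = ENNReal.ofReal (c n * τ) := by
        rw [setLIntegral_const, Real.volume_Ioc, show ((n : ℝ) + 1) * τ - n * τ = τ by ring,
          ← ENNReal.ofReal_mul' hτ.le]

section KFunctional

open Finset

variable {X Y : Type*} [SeminormedAddCommGroup X] [SeminormedAddCommGroup Y] (A : X → Y)

noncomputable def kFunctional (t : ℝ) (w : X) : ℝ :=
  sInf {c : ℝ | ∃ a b : X, w = a + b ∧ c = ‖a‖ + t * ‖A b‖}

theorem kFunctional_nonneg {t : ℝ} (ht : 0 ≤ t) (w : X) : 0 ≤ kFunctional A t w :=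
  Real.sInf_nonneg fun _ ⟨_, _, _, hc⟩ => hc ▸ by positivity

theorem kFunctional_add_le {t : ℝ} (ht : 0 ≤ t) (a b : X) :
    kFunctional A t (a + b) ≤ ‖a‖ + t * ‖A b‖ :=
  csInf_le ⟨0, fun _ ⟨_, _, _, hc⟩ => hc ▸ by positivity⟩ ⟨a, b, rfl, rfl⟩

theorem kFunctional_le_sum_norm_sub {t : ℝ} (ht : 0 ≤ t) (u : ℕ → X) (n : ℕ) :
    kFunctional A t (u 0) ≤ ∑ j ∈ range n, ‖u (j + 1) - u j‖ + t * ‖A (u n)‖ := by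
  have h := kFunctional_add_le A ht (u 0 - u n) (u n)
  rw [sub_add_cancel] at h
  refine h.trans (add_le_add_left ?_ _)
  calc ‖u 0 - u n‖ = dist (u 0) (u n) := (dist_eq_norm _ _).symm
    _ ≤ ∑ j ∈ range n, dist (u j) (u (j + 1)) := dist_le_range_sum_dist u n
    _ = ∑ j ∈ range n, ‖u (j + 1) - u j‖ :=
        sum_congr rfl fun j _ => by rw [dist_comm, dist_eq_norm]

theorem kFunctional_div_le [NormedSpace ℝ X] {τ t : ℝ} (hτ : 0 < τ) (u : ℕ → X) {n : ℕ}
    (hnt : n * τ ≤ t) (ht : 0 < t) :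
    kFunctional A t (u 0) / t ≤ (∑ j ∈ range n, ‖τ⁻¹ • (u (j + 1) - u j)‖) / n + ‖A (u n)‖ := by
  set S := ∑ j ∈ range n, ‖u (j + 1) - u j‖
  have hS : ∑ j ∈ range n, ‖τ⁻¹ • (u (j + 1) - u j)‖ = S / τ := by
    simp only [norm_smul, norm_inv, Real.norm_of_nonneg hτ.le, ← mul_sum, S]
    exact inv_mul_eq_div τ S
  have hS0 : 0 ≤ S := sum_nonneg fun j _ => norm_nonneg _
  rw [hS, div_div, mul_comm τ]
  calc kFunctional A t (u 0) / t ≤ (S + t * ‖A (u n)‖) / t := by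
        gcongr; exact kFunctional_le_sum_norm_sub A ht.le u n
    _ = S / t + ‖A (u n)‖ := by field_simp
    _ ≤ S / (n * τ) + ‖A (u n)‖ := by
        refine add_le_add_left ?_ _
        -- for `n = 0`, `S` is an empty sum and both sides vanish
        rcases n.eq_zero_or_pos with rfl | hn
        · simp [S]
        · exact div_le_div_of_nonneg_left hS0 (by positivity) hnt

theorem lintegral_Ioi_kFunctional_le_tsum [NormedSpace ℝ X] {p τ : ℝ} (hp : 0 < p) (hτ : 0 < τ)
    (u : ℕ → X) :
    ∫⁻ t in Ioi 0, ENNReal.ofReal ((t ^ (-1 + 1 / p) * kFunctional A t (u 0)) ^ p / t) ≤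
      ∑' n : ℕ, ENNReal.ofReal
        (((∑ j ∈ range n, ‖τ⁻¹ • (u (j + 1) - u j)‖) / n + ‖A (u n)‖) ^ p * τ) := by
  refine lintegral_Ioi_le_tsum_of_le_on_Ioc hτ fun n t ht => ENNReal.ofReal_le_ofReal ?_
  have ht0 : 0 < t := (by positivity : (0 : ℝ) ≤ n * τ).trans_lt ht.1
  rw [Real.rpow_neg_one_add_one_div_mul_rpow_div hp.ne' ht0 (kFunctional_nonneg A ht0.le _)]
  exact Real.rpow_le_rpow (div_nonneg (kFunctional_nonneg A ht0.le _) ht0.le)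
    (kFunctional_div_le A hτ u ht.1.le ht0) hp.le

end KFunctional

theorem stmt12_general (p : ℝ) (hp : 1 < p) :
    ∃ C > 0, ∀ (X : Type) [NormedAddCommGroup X] [NormedSpace ℝ X] [CompleteSpace X],
      ∀ (A Ainv : X →L[ℝ] X),
        A.comp Ainv = ContinuousLinearMap.id ℝ X →
        Ainv.comp A = ContinuousLinearMap.id ℝ X →
      ∀ (τ : ℝ), 0 < τ → ∀ v : ℕ → X,
        Summable (fun n => ‖A (v (n + 1))‖ ^ p) →
        Summable (fun n => ‖τ⁻¹ • (v (n + 1) - v n)‖ ^ p) →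
        (∫⁻ t in Ioi (0 : ℝ), ENNReal.ofReal
            ((t ^ (-1 + 1 / p) *
              sInf {c : ℝ | ∃ a b : X, v 1 = a + b ∧ c = ‖a‖ + t * ‖A b‖}) ^ p / t))
            ^ (1 / p)
          ≤ ENNReal.ofReal (C *
              ((∑' n, ‖A (v (n + 1))‖ ^ p * τ) ^ (1 / p)
                + (∑' n, ‖τ⁻¹ • (v (n + 1) - v n)‖ ^ p * τ) ^ (1 / p))) := by
  refine ⟨p / (p - 1), div_pos (by linarith) (by linarith), ?_⟩
  intro X _ _ _ A _ _ _ τ hτ v hB hD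
  have hp' : 0 ≤ 1 / p := by positivity
  obtain ⟨hsum, hle⟩ := summable_and_tsum_rpow_average_add_le hp hτ.le
    (fun n => norm_nonneg _) (fun n => norm_nonneg _) hD hB
  refine (ENNReal.rpow_le_rpow
    (lintegral_Ioi_kFunctional_le_tsum A (by linarith) hτ fun n => v (n + 1)) hp').trans ?_
  rw [← ENNReal.ofReal_tsum_of_nonneg (fun n => by positivity) hsum,
    ENNReal.ofReal_rpow_of_nonneg (tsum_nonneg fun n => by positivity) hp']
  exact ENNReal.ofReal_le_ofReal hle

/-- discrete trace theorem. For a bounded invertible operator `A` on a Banach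
space `X`, with `K(t,w) = inf{‖a‖ + t‖Ab‖ : w = a + b}` the K-functional of the pair
`(X, D(A))` and `‖w‖_{1−1/p,p}^p = ∫_0^∞ (t^{−1+1/p}K(t,w))^p dt/t`, there exists `C > 0`
depending only on `p` such that
`‖v¹‖_{1−1/p,p} ≤ C(‖Av_1‖_{l^p_τ} + ‖D_τ v‖_{l^p_τ})`, uniformly in `τ`. -/
theorem stmt12 (p : ℝ) (hp : 1 < p) (q : ℝ) (hq : 1 < q) :
    ∃ C > 0, ∀ (X : Type) [NormedAddCommGroup X] [NormedSpace ℝ X] [CompleteSpace X],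
      ∀ (A Ainv : X →L[ℝ] X),
        A.comp Ainv = ContinuousLinearMap.id ℝ X →
        Ainv.comp A = ContinuousLinearMap.id ℝ X →
      ∀ (τ : ℝ), 0 < τ → ∀ v : ℕ → X,
        Summable (fun n => ‖A (v (n + 1))‖ ^ p) →
        Summable (fun n => ‖τ⁻¹ • (v (n + 1) - v n)‖ ^ p) →
        (∫⁻ t in Ioi (0 : ℝ), ENNReal.ofReal
            ((t ^ (-1 + 1 / p) *
              sInf {c : ℝ | ∃ a b : X, v 1 = a + b ∧ c = ‖a‖ + t * ‖A b‖}) ^ p / t))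
            ^ (1 / p)
          ≤ ENNReal.ofReal (C *
              ((∑' n, ‖A (v (n + 1))‖ ^ p * τ) ^ (1 / p)
                + (∑' n, ‖τ⁻¹ • (v (n + 1) - v n)‖ ^ p * τ) ^ (1 / p))) :=
  stmt12_general p hp
end
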